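/- Let 0 < α < β < 1, let (T_i)_{i∈I} with T_i(x,y) = (βx + b_i, αy + a_i) be an affine IFS on ℝ² satisfying T_i((0,1)²) ∩ T_j((0,1)²) = ∅ for i ≠ j, with attractor K, and let ν be the projection to the x-axis of the uniform self-affine measure μ (so μ(T_𝚒((0,1)²)) = m^{-k} for 𝚒 ∈ I^k, m = #I). If s is the Frostman dimension of ν, then for every ε > 0 there is a constant such that for all z in π(K) and 0 < r < 1, the r-covering number of the vertical tube of width 2r through z intersected with K is at most a constant times (1/r)^{log(mβ^{s−ε})/log(1/α)}. -/

import Mathlib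

/-!
Fix the scale `n = k + 1` with `α ^ (k + 1) < r ≤ α ^ k`. The level-`n` cylinders `T_w(K)` lie
in `β ^ n × α ^ n` rectangles with pairwise disjoint interiors, so no point lies in more than four
of them, while each carries `μ`-mass at least `m ^ (-n)` because `μ` is concentrated on `K`.
Hence at most `4 m ^ n ν(B(z, r + β ^ n))` cylinders meet the tube of width `2r` through `z`,
and each of them meets the tube in a set of height `α ^ n ≤ r`, covered by two `r`-balls.
Frostman's bound `ν(B(z, ρ)) ≲ ρ ^ t` with `t > s - ε` bounds this by a constant times
`(m β ^ (s - ε)) ^ k`, which is comparable to `(1/r) ^ (log (m β ^ (s - ε)) / log (1/α))`.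
-/

open MeasureTheory

/-- The smallest number of open balls of radius `r` needed to cover `E`. -/
noncomputable def coverNum {α : Type*} [PseudoMetricSpace α] (r : ℝ) (E : Set α) : ℕ :=
  sInf {n : ℕ | ∃ S : Finset α, S.card = n ∧ E ⊆ ⋃ x ∈ S, Metric.ball x r}

/-- The Frostman dimension of a measure on `ℝ`:
`sup{t ≥ 0 : ∃ C, ∀ z r ∈ (0,1), ν(B(z,r)) ≤ C r^t}`. -/
noncomputable def frostmanDim (ν : Measure ℝ) : ℝ :=
  sSup {t : ℝ | 0 ≤ t ∧ ∃ C : ℝ, 0 < C ∧ ∀ z : ℝ, ∀ r : ℝ, 0 < r → r < 1 →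
    (ν (Metric.ball z r)).toReal ≤ C * r ^ t}

open Set Metric
open scoped ENNReal NNReal Finset

section IteratedFunctionSystem

variable {X I : Type*}

def iterWord (T : I → X → X) : {n : ℕ} → (Fin n → I) → X → X
  | 0, _ => id
  | _ + 1, w => T (w 0) ∘ iterWord T (Fin.tail w)

lemma iterWord_succ (T : I → X → X) {n : ℕ} (w : Fin (n + 1) → I) :
    iterWord T w = T (w 0) ∘ iterWord T (Fin.tail w) := rfl

lemma mapsTo_iterWord {T : I → X → X} {s : Set X} (hT : ∀ i, MapsTo (T i) s s) {n : ℕ}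
    (w : Fin n → I) : MapsTo (iterWord T w) s s := by
  induction n with
  | zero => exact mapsTo_id s
  | succ n ih => exact (hT (w 0)).comp (ih (Fin.tail w))

lemma subset_iUnion_image_iterWord {T : I → X → X} {K : Set X} (hK : K ⊆ ⋃ i, T i '' K)
    (n : ℕ) : K ⊆ ⋃ w : Fin n → I, iterWord T w '' K := by
  induction n with
  | zero => exact fun x hx => mem_iUnion.2 ⟨Fin.elim0, x, hx, rfl⟩
  | succ n ih =>
    intro x hx
    obtain ⟨i, y, hy, rfl⟩ := mem_iUnion.1 (hK hx)
    obtain ⟨w, z, hz, rfl⟩ := mem_iUnion.1 (ih hy)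
    exact mem_iUnion.2 ⟨Fin.cons i w, z, hz, rfl⟩

lemma disjoint_image_iterWord {T : I → X → X} {U : Set X}
    (hinj : ∀ i, Function.Injective (T i)) (hU : ∀ i, MapsTo (T i) U U)
    (hdisj : Pairwise fun i j => Disjoint (T i '' U) (T j '' U)) {n : ℕ} {w w' : Fin n → I}
    (hne : w ≠ w') : Disjoint (iterWord T w '' U) (iterWord T w' '' U) := by
  induction n with
  | zero => exact absurd (Subsingleton.elim w w') hne
  | succ n ih =>
    rw [iterWord_succ, iterWord_succ, image_comp, image_comp]
    by_cases h0 : w 0 = w' 0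
    · rw [h0, disjoint_image_iff (hinj _)]
      refine ih fun htail => hne ?_
      rw [← Fin.cons_self_tail w, ← Fin.cons_self_tail w', h0, htail]
    · exact (hdisj h0).mono (image_mono (mapsTo_iterWord hU _).image_subset)
        (image_mono (mapsTo_iterWord hU _).image_subset)

lemma lipschitzWith_iterWord [PseudoEMetricSpace X] {T : I → X → X} {c : ℝ≥0}
    (hT : ∀ i, LipschitzWith c (T i)) {n : ℕ} (w : Fin n → I) :
    LipschitzWith (c ^ n) (iterWord T w) := by
  induction n with
  | zero => rw [pow_zero]; exact LipschitzWith.id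
  | succ n ih => rw [iterWord_succ, pow_succ']; exact (hT _).comp (ih _)

lemma LipschitzWith.infDist_le_mul_of_mapsTo [MetricSpace X] {f : X → X} {c : ℝ≥0}
    (hf : LipschitzWith c f) {s : Set X} (hs : MapsTo f s s) (x : X) :
    infDist (f x) s ≤ c * infDist x s := by
  rcases s.eq_empty_or_nonempty with rfl | hne
  · simp
  have : Nonempty s := hne.to_subtype
  rw [infDist_eq_iInf (x := x), Real.mul_iInf_of_nonneg c.coe_nonneg]
  exact le_ciInf fun y => (infDist_le_dist_of_mem (hs y.2)).trans (hf.dist_le_mul x y)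

lemma LipschitzWith.mapsTo_thickening [MetricSpace X] {f : X → X} {c : ℝ≥0}
    (hf : LipschitzWith c f) {s : Set X} (hs : MapsTo f s s) {R δ : ℝ} (hRδ : c * R < δ) :
    MapsTo f (thickening R s) (thickening δ s) := by
  intro x hx
  obtain ⟨y, hy, hxy⟩ := mem_thickening_iff.1 hx
  exact mem_thickening_iff.2 ⟨f y, hs hy, (hf.dist_le_mul x y).trans_lt
    ((mul_le_mul_of_nonneg_left hxy.le c.2).trans_lt hRδ)⟩

lemma subset_of_lipschitzWith_of_mapsTo [MetricSpace X] {T : I → X → X} {c : ℝ≥0} (hc : c < 1)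
    (hT : ∀ i, LipschitzWith c (T i)) {K Q : Set X} (hK : IsCompact K) (hKne : K.Nonempty)
    (hKT : K ⊆ ⋃ i, T i '' K) (hQ : IsClosed Q) (hQne : Q.Nonempty)
    (hTQ : ∀ i, MapsTo (T i) Q Q) : K ⊆ Q := by
  obtain ⟨p, hpK, hmax⟩ := hK.exists_isMaxOn hKne (continuous_infDist_pt Q).continuousOn
  obtain ⟨i, q, hqK, rfl⟩ := mem_iUnion.1 (hKT hpK)
  have hp : infDist (T i q) Q ≤ c * infDist (T i q) Q :=
    ((hT i).infDist_le_mul_of_mapsTo (hTQ i) q).trans (mul_le_mul_of_nonneg_left (hmax hqK) c.2)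
  have hp0 : infDist (T i q) Q ≤ 0 := by
    nlinarith [infDist_nonneg (x := T i q) (s := Q), (show (c : ℝ) < 1 from hc)]
  intro x hx
  rw [← hQ.closure_eq, mem_closure_iff_infDist_zero hQne]
  exact le_antisymm ((hmax hx).trans hp0) infDist_nonneg

section Measure

variable [Fintype I] [MeasurableSpace X] {T : I → X → X} {μ : Measure X}

lemma measure_eq_sum_preimage_iterWord (hT : ∀ i, Measurable (T i))
    (hμ : μ = (Fintype.card I : ℝ≥0∞)⁻¹ • ∑ i, μ.map (T i)) (n : ℕ) {A : Set X}
    (hA : MeasurableSet A) :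
    μ A = ((Fintype.card I : ℝ≥0∞) ^ n)⁻¹ * ∑ w : Fin n → I, μ (iterWord T w ⁻¹' A) := by
  induction n generalizing A with
  | zero => simp [iterWord]
  | succ n ih =>
    have hstep : μ A = (Fintype.card I : ℝ≥0∞)⁻¹ * ∑ i, μ (T i ⁻¹' A) := by
      conv_lhs => rw [hμ]
      simp [Measure.finsetSum_apply, Measure.map_apply (hT _) hA]
    rw [hstep, Finset.sum_congr rfl fun i _ => ih (hT i hA), ← Finset.mul_sum, ← mul_assoc,
      ← ENNReal.mul_inv (by simp) (by simp), ← pow_succ', ← (Fin.consEquiv _).sum_comp,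
      Fintype.sum_prod_type]
    rfl

lemma inv_pow_card_le_measure_image_iterWord (hT : ∀ i, Measurable (T i))
    (hμ : μ = (Fintype.card I : ℝ≥0∞)⁻¹ • ∑ i, μ.map (T i)) {K : Set X} (hμK : μ K = 1)
    {n : ℕ} (w : Fin n → I) (hK : MeasurableSet (iterWord T w '' K)) :
    ((Fintype.card I : ℝ≥0∞) ^ n)⁻¹ ≤ μ (iterWord T w '' K) := by
  calc ((Fintype.card I : ℝ≥0∞) ^ n)⁻¹
      = ((Fintype.card I : ℝ≥0∞) ^ n)⁻¹ * μ K := by rw [hμK, mul_one]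
    _ ≤ ((Fintype.card I : ℝ≥0∞) ^ n)⁻¹ *
          ∑ v : Fin n → I, μ (iterWord T v ⁻¹' (iterWord T w '' K)) := by
        gcongr
        exact (measure_mono (subset_preimage_image _ _)).trans (Finset.single_le_sum
          (f := fun v => μ (iterWord T v ⁻¹' (iterWord T w '' K))) (fun _ _ => zero_le)
          (Finset.mem_univ w))
    _ = μ (iterWord T w '' K) := (measure_eq_sum_preimage_iterWord hT hμ n hK).symm

lemma measure_thickening_le_measure_thickening [Nonempty I] [MetricSpace X] [BorelSpace X]
    {c : ℝ≥0} (hc : c < 1) (hT : ∀ i, LipschitzWith c (T i))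
    (hμ : μ = (Fintype.card I : ℝ≥0∞)⁻¹ • ∑ i, μ.map (T i)) {K : Set X}
    (hTK : ∀ i, MapsTo (T i) K K) {R δ : ℝ} (hR : 0 < R) (hδ : 0 < δ) :
    μ (thickening R K) ≤ μ (thickening δ K) := by
  obtain ⟨n, hn⟩ := exists_pow_lt_of_lt_one (div_pos hδ hR) hc
  have hsub : ∀ w : Fin n → I, thickening R K ⊆ iterWord T w ⁻¹' thickening δ K := fun w =>
    (lipschitzWith_iterWord hT w).mapsTo_thickening (mapsTo_iterWord hTK w)
      (by push_cast; exact (lt_div_iff₀ hR).1 hn)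
  have hm : ((Fintype.card I : ℝ≥0∞) ^ n) ≠ 0 := by simp
  calc μ (thickening R K)
      = ((Fintype.card I : ℝ≥0∞) ^ n)⁻¹ * ∑ _w : Fin n → I, μ (thickening R K) := by
        rw [Finset.sum_const, Finset.card_univ, Fintype.card_fun, Fintype.card_fin, nsmul_eq_mul,
          ← mul_assoc, Nat.cast_pow, ENNReal.inv_mul_cancel hm (by simp), one_mul]
    _ ≤ ((Fintype.card I : ℝ≥0∞) ^ n)⁻¹ *
          ∑ w : Fin n → I, μ (iterWord T w ⁻¹' thickening δ K) := by
        gcongr with w; exact hsub w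
    _ = μ (thickening δ K) :=
        (measure_eq_sum_preimage_iterWord (fun i => (hT i).continuous.measurable) hμ n
          isOpen_thickening.measurableSet).symm

lemma measure_eq_one_of_lipschitzWith [Nonempty I] [MetricSpace X] [BorelSpace X]
    [IsProbabilityMeasure μ] {c : ℝ≥0} (hc : c < 1) (hT : ∀ i, LipschitzWith c (T i))
    (hμ : μ = (Fintype.card I : ℝ≥0∞)⁻¹ • ∑ i, μ.map (T i)) {K : Set X} (hK : IsClosed K)
    (hKne : K.Nonempty) (hTK : ∀ i, MapsTo (T i) K K) : μ K = 1 := by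
  have hthick : ∀ δ > 0, μ (thickening δ K) = 1 := by
    intro δ hδ
    refine le_antisymm prob_le_one ?_
    have hunion : (⋃ j : ℕ, thickening ((j : ℝ) + 1) K) = univ := by
      refine eq_univ_of_forall fun x => mem_iUnion.2 ?_
      obtain ⟨j, hj⟩ := exists_nat_gt (infDist x K)
      exact ⟨j, (mem_thickening_iff_infDist_lt hKne).2 (by linarith)⟩
    calc (1 : ℝ≥0∞) = ⨆ j : ℕ, μ (thickening ((j : ℝ) + 1) K) := by
          rw [← Monotone.measure_iUnion, hunion, measure_univ]
          exact fun i j hij => thickening_mono (by gcongr) K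
      _ ≤ μ (thickening δ K) := iSup_le fun j =>
          measure_thickening_le_measure_thickening hc hT hμ hTK (by positivity) hδ
  refine tendsto_nhds_unique (tendsto_measure_thickening_of_isClosed
    ⟨1, one_pos, by simp [hthick 1 one_pos]⟩ hK) ?_
  exact tendsto_const_nhds.congr' (eventually_nhdsWithin_of_forall fun δ hδ => (hthick δ hδ).symm)

end Measure

end IteratedFunctionSystem

lemma sum_measure_le_mul_measure_biUnion {X ι : Type*} [MeasurableSpace X] (μ : Measure X)
    (F : Finset ι) {A : ι → Set X} (hA : ∀ i ∈ F, MeasurableSet (A i)) {N : ℕ}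
    (hN : ∀ x (G : Finset ι), (∀ i ∈ G, x ∈ A i) → #G ≤ N) :
    ∑ i ∈ F, μ (A i) ≤ N * μ (⋃ i ∈ F, A i) := by
  classical
  calc ∑ i ∈ F, μ (A i) = ∑ i ∈ F, ∫⁻ x, (A i).indicator 1 x ∂μ :=
        Finset.sum_congr rfl fun i hi => (lintegral_indicator_one (hA i hi)).symm
    _ = ∫⁻ x, ∑ i ∈ F, (A i).indicator 1 x ∂μ :=
        (lintegral_finsetSum' F fun i hi =>
          (measurable_const.indicator (hA i hi)).aemeasurable).symm
    _ ≤ ∫⁻ x, N * (⋃ i ∈ F, A i).indicator 1 x ∂μ := by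
        refine lintegral_mono fun x => ?_
        by_cases hx : x ∈ ⋃ i ∈ F, A i
        · rw [indicator_of_mem hx, Pi.one_apply, mul_one]
          calc ∑ i ∈ F, (A i).indicator 1 x = (#{i ∈ F | x ∈ A i} : ℝ≥0∞) := by
                simp [indicator_apply, Finset.sum_boole]
            _ ≤ N := by exact_mod_cast hN x _ fun i hi => (Finset.mem_filter.1 hi).2
        · rw [indicator_of_notMem hx, mul_zero]
          exact (Finset.sum_eq_zero fun i hi =>
            indicator_of_notMem (fun hxi => hx (mem_iUnion₂.2 ⟨i, hi, hxi⟩)) _).le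
    _ = N * μ (⋃ i ∈ F, A i) := by
        rw [lintegral_const_mul' _ _ (by simp),
          lintegral_indicator_one (F.measurableSet_biUnion hA)]

lemma coverNum_le_card {α : Type*} [PseudoMetricSpace α] {r : ℝ} {E : Set α} {S : Finset α}
    (h : E ⊆ ⋃ x ∈ S, ball x r) : coverNum r E ≤ #S :=
  Nat.sInf_le ⟨S, rfl, h⟩

lemma coverNum_le_two_mul_card {α ι : Type*} [PseudoMetricSpace α] {r : ℝ} {E : Set α}
    (F : Finset ι) (A : ι → Set α) (hE : E ⊆ ⋃ i ∈ F, A i) (x y : ι → α)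
    (hA : ∀ i ∈ F, A i ⊆ ball (x i) r ∪ ball (y i) r) : coverNum r E ≤ 2 * #F := by
  classical
  refine (coverNum_le_card (S := F.biUnion fun i => {x i, y i}) fun p hp => ?_).trans ?_
  · obtain ⟨i, hi, hpi⟩ := mem_iUnion₂.1 (hE hp)
    rcases hA i hi hpi with h | h
    · exact mem_iUnion₂.2 ⟨x i, Finset.mem_biUnion.2 ⟨i, hi, by simp⟩, h⟩
    · exact mem_iUnion₂.2 ⟨y i, Finset.mem_biUnion.2 ⟨i, hi, by simp⟩, h⟩
  · rw [mul_comm]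
    exact Finset.card_biUnion_le_card_mul _ _ _ fun i _ => Finset.card_le_two

lemma preimage_fst_ball_inter_subset_union_ball {z r d h : ℝ} (hhr : h ≤ r) :
    Prod.fst ⁻¹' ball z r ∩ Prod.snd ⁻¹' Icc d (d + h) ⊆
      ball (z - r / 2, d + h / 2) r ∪ ball (z + r / 2, d + h / 2) r := by
  rintro p ⟨hp1, hp2, hp2'⟩
  rw [Set.mem_preimage, Real.ball_eq_Ioo, mem_Ioo] at hp1
  simp only [mem_union, mem_ball, Prod.dist_eq, Real.dist_eq, max_lt_iff, abs_lt]
  rcases le_total p.1 z with hz | hz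
  · left; refine ⟨⟨?_, ?_⟩, ?_, ?_⟩ <;> linarith
  · right; refine ⟨⟨?_, ?_⟩, ?_, ?_⟩ <;> linarith

lemma xor_eq_of_mem_Icc_of_disjoint_Ioo {a a' x e : ℝ} (he : 0 < e) (hx : x ∈ Icc a (a + e))
    (hx' : x ∈ Icc a' (a' + e)) (hd : Disjoint (Ioo a (a + e)) (Ioo a' (a' + e))) :
    Xor (a = x) (a' = x) := by
  rw [Ioo_disjoint_Ioo, min_le_iff, le_max_iff, le_max_iff] at hd
  obtain ⟨hx1, hx2⟩ := hx
  obtain ⟨hx1', hx2'⟩ := hx'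
  rcases hd with (hd | hd) | (hd | hd)
  · linarith
  · exact Or.inr ⟨by linarith, fun h => by linarith⟩
  · exact Or.inl ⟨by linarith, fun h => by linarith⟩
  · linarith

/-- Two boxes containing `p` are separated in some coordinate, and in that coordinate exactly one
of them has its corner at `p`; so a box is determined by which corner coordinates equal `p`'s. -/
lemma card_le_four_of_mem_Icc_prod {ι : Type*} {F : Finset ι} {e h : ℝ} (he : 0 < e)
    (hh : 0 < h) {c : ι → ℝ × ℝ}
    (hdisj : (F : Set ι).Pairwise fun i j =>
      Disjoint (Ioo (c i).1 ((c i).1 + e) ×ˢ Ioo (c i).2 ((c i).2 + h))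
        (Ioo (c j).1 ((c j).1 + e) ×ˢ Ioo (c j).2 ((c j).2 + h)))
    {p : ℝ × ℝ} (hp : ∀ i ∈ F, p ∈ Icc (c i).1 ((c i).1 + e) ×ˢ Icc (c i).2 ((c i).2 + h)) :
    #F ≤ 4 := by
  classical
  let f : ι → Bool × Bool := fun i => (decide ((c i).1 = p.1), decide ((c i).2 = p.2))
  have hinj : Set.InjOn f F := by
    intro i hi j hj hfij
    by_contra hne
    obtain ⟨hi1, hi2⟩ := hp i hi
    obtain ⟨hj1, hj2⟩ := hp j hj
    simp only [f, Prod.mk.injEq, decide_eq_decide] at hfij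
    rcases disjoint_prod.1 (hdisj hi hj hne) with hd | hd
    · exact (xor_iff_not_iff _ _).1 (xor_eq_of_mem_Icc_of_disjoint_Ioo he hi1 hj1 hd) hfij.1
    · exact (xor_iff_not_iff _ _).1 (xor_eq_of_mem_Icc_of_disjoint_Ioo hh hi2 hj2 hd) hfij.2
  exact Finset.card_le_card_of_injOn f (fun _ _ => Finset.mem_univ _) hinj

def diagAffine (e h : ℝ) (c p : ℝ × ℝ) : ℝ × ℝ := (e * p.1 + c.1, h * p.2 + c.2)

lemma diagAffine_comp (e h e' h' : ℝ) (c c' : ℝ × ℝ) :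
    diagAffine e h c ∘ diagAffine e' h' c' =
      diagAffine (e * e') (h * h') (diagAffine e h c c') := by
  funext p
  simp only [diagAffine, Function.comp_apply, Prod.mk.injEq]
  constructor <;> ring

lemma continuous_diagAffine (e h : ℝ) (c : ℝ × ℝ) : Continuous (diagAffine e h c) := by
  unfold diagAffine; fun_prop

lemma injective_diagAffine {e h : ℝ} (he : e ≠ 0) (hh : h ≠ 0) (c : ℝ × ℝ) :
    Function.Injective (diagAffine e h c) := by
  intro p q hpq
  simp only [diagAffine, Prod.mk.injEq, add_left_inj, mul_right_inj' he, mul_right_inj' hh] at hpq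
  exact Prod.ext hpq.1 hpq.2

lemma lipschitzWith_diagAffine {e h : ℝ} (hh : 0 ≤ h) (hhe : h ≤ e) (c : ℝ × ℝ) :
    LipschitzWith e.toNNReal (diagAffine e h c) := by
  refine LipschitzWith.of_dist_le_mul fun p q => ?_
  have he : 0 ≤ e := hh.trans hhe
  simp only [diagAffine, Prod.dist_eq, Real.dist_eq, add_sub_add_right_eq_sub, ← mul_sub,
    abs_mul, abs_of_nonneg he, abs_of_nonneg hh, Real.coe_toNNReal _ he]
  exact max_le (mul_le_mul_of_nonneg_left (le_max_left _ _) he)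
    ((mul_le_mul_of_nonneg_right hhe (abs_nonneg _)).trans
      (mul_le_mul_of_nonneg_left (le_max_right _ _) he))

lemma image_diagAffine_prod (e h : ℝ) (c : ℝ × ℝ) (s t : Set ℝ) :
    diagAffine e h c '' (s ×ˢ t) = ((e * · + c.1) '' s) ×ˢ ((h * · + c.2) '' t) :=
  (prod_image_image_eq (m₁ := (e * · + c.1)) (m₂ := (h * · + c.2))).symm

lemma image_diagAffine_Icc {e h : ℝ} (he : 0 < e) (hh : 0 < h) (c : ℝ × ℝ) :
    diagAffine e h c '' (Icc 0 1 ×ˢ Icc 0 1) = Icc c.1 (c.1 + e) ×ˢ Icc c.2 (c.2 + h) := by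
  rw [image_diagAffine_prod, image_affine_Icc' he, image_affine_Icc' hh]
  simp [add_comm]

lemma image_diagAffine_Ioo {e h : ℝ} (he : 0 < e) (hh : 0 < h) (c : ℝ × ℝ) :
    diagAffine e h c '' (Ioo 0 1 ×ˢ Ioo 0 1) = Ioo c.1 (c.1 + e) ×ˢ Ioo c.2 (c.2 + h) := by
  rw [image_diagAffine_prod, image_affine_Ioo he, image_affine_Ioo hh]
  simp [add_comm]

lemma mapsTo_diagAffine_Icc {e h : ℝ} (he : 0 < e) (hh : 0 < h) {c : ℝ × ℝ}
    (hc₁ : 0 ≤ c.1 ∧ c.1 ≤ 1 - e) (hc₂ : 0 ≤ c.2 ∧ c.2 ≤ 1 - h) :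
    MapsTo (diagAffine e h c) (Icc 0 1 ×ˢ Icc 0 1) (Icc 0 1 ×ˢ Icc 0 1) := by
  rw [mapsTo_iff_image_subset, image_diagAffine_Icc he hh]
  exact prod_mono (Icc_subset_Icc hc₁.1 (by linarith)) (Icc_subset_Icc hc₂.1 (by linarith))

lemma mapsTo_diagAffine_Ioo {e h : ℝ} (he : 0 < e) (hh : 0 < h) {c : ℝ × ℝ}
    (hc₁ : 0 ≤ c.1 ∧ c.1 ≤ 1 - e) (hc₂ : 0 ≤ c.2 ∧ c.2 ≤ 1 - h) :
    MapsTo (diagAffine e h c) (Ioo 0 1 ×ˢ Ioo 0 1) (Ioo 0 1 ×ˢ Ioo 0 1) := by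
  rw [mapsTo_iff_image_subset, image_diagAffine_Ioo he hh]
  exact prod_mono (Ioo_subset_Ioo hc₁.1 (by linarith)) (Ioo_subset_Ioo hc₂.1 (by linarith))

section DiagonalSelfAffine

variable {I : Type*} {α β : ℝ} {c : I → ℝ × ℝ} {T : I → ℝ × ℝ → ℝ × ℝ} {K : Set (ℝ × ℝ)}

lemma iterWord_eq_diagAffine (hT : ∀ i, T i = diagAffine β α (c i)) {n : ℕ} (w : Fin n → I) :
    iterWord T w = diagAffine (β ^ n) (α ^ n) (iterWord T w 0) := by
  induction n with
  | zero => funext p; simp [iterWord, diagAffine]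
  | succ n ih =>
    have h0 : iterWord T w 0 = diagAffine β α (c (w 0)) (iterWord T (Fin.tail w) 0) := by
      rw [iterWord_succ, Function.comp_apply, hT]
    rw [h0, pow_succ', pow_succ', ← diagAffine_comp, ← hT, ← ih]
    rfl

lemma image_iterWord_subset_Icc (hα : 0 < α) (hβ : 0 < β)
    (hT : ∀ i, T i = diagAffine β α (c i)) (hKQ : K ⊆ Icc 0 1 ×ˢ Icc 0 1) {n : ℕ}
    (w : Fin n → I) :
    iterWord T w '' K ⊆ Icc (iterWord T w 0).1 ((iterWord T w 0).1 + β ^ n) ×ˢ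
      Icc (iterWord T w 0).2 ((iterWord T w 0).2 + α ^ n) := by
  rw [← image_diagAffine_Icc (pow_pos hβ n) (pow_pos hα n), ← iterWord_eq_diagAffine hT]
  exact image_mono hKQ

lemma image_iterWord_Ioo (hα : 0 < α) (hβ : 0 < β) (hT : ∀ i, T i = diagAffine β α (c i))
    {n : ℕ} (w : Fin n → I) :
    iterWord T w '' (Ioo 0 1 ×ˢ Ioo 0 1) =
      Ioo (iterWord T w 0).1 ((iterWord T w 0).1 + β ^ n) ×ˢ
        Ioo (iterWord T w 0).2 ((iterWord T w 0).2 + α ^ n) := by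
  rw [← image_diagAffine_Ioo (pow_pos hβ n) (pow_pos hα n), ← iterWord_eq_diagAffine hT]

lemma card_le_four_of_forall_mem_image_iterWord (hα : 0 < α) (hβ : 0 < β)
    (hT : ∀ i, T i = diagAffine β α (c i))
    (hTU : ∀ i, MapsTo (T i) (Ioo 0 1 ×ˢ Ioo 0 1) (Ioo 0 1 ×ˢ Ioo 0 1))
    (hsep : Pairwise fun i j =>
      Disjoint (T i '' (Ioo 0 1 ×ˢ Ioo 0 1)) (T j '' (Ioo 0 1 ×ˢ Ioo 0 1)))
    (hKQ : K ⊆ Icc 0 1 ×ˢ Icc 0 1) {n : ℕ} (p : ℝ × ℝ) (G : Finset (Fin n → I))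
    (hG : ∀ w ∈ G, p ∈ iterWord T w '' K) : #G ≤ 4 := by
  have hinj : ∀ i, Function.Injective (T i) := fun i =>
    hT i ▸ injective_diagAffine hβ.ne' hα.ne' _
  refine card_le_four_of_mem_Icc_prod (pow_pos hβ n) (pow_pos hα n)
    (c := fun w => iterWord T w 0) (fun w _ w' _ hne => ?_)
    fun w hw => image_iterWord_subset_Icc hα hβ hT hKQ w (hG w hw)
  simpa only [image_iterWord_Ioo hα hβ hT] using disjoint_image_iterWord hinj hTU hsep hne

open Classical in
noncomputable def wordsMeetingTube [Fintype I] (T : I → ℝ × ℝ → ℝ × ℝ) (K : Set (ℝ × ℝ))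
    (n : ℕ) (z r : ℝ) : Finset (Fin n → I) :=
  {w | (Prod.fst ⁻¹' ball z r ∩ iterWord T w '' K).Nonempty}

variable [Fintype I]

lemma mem_wordsMeetingTube {n : ℕ} {z r : ℝ} {w : Fin n → I} :
    w ∈ wordsMeetingTube T K n z r ↔ (Prod.fst ⁻¹' ball z r ∩ iterWord T w '' K).Nonempty := by
  simp [wordsMeetingTube]

lemma coverNum_preimage_fst_ball_inter_le (hα : 0 < α) (hβ : 0 < β)
    (hT : ∀ i, T i = diagAffine β α (c i)) (hKQ : K ⊆ Icc 0 1 ×ˢ Icc 0 1)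
    (hKT : K ⊆ ⋃ i, T i '' K) {n : ℕ} {r : ℝ} (hn : α ^ n ≤ r) (z : ℝ) :
    coverNum r (Prod.fst ⁻¹' ball z r ∩ K) ≤ 2 * #(wordsMeetingTube T K n z r) := by
  refine coverNum_le_two_mul_card _ (fun w => Prod.fst ⁻¹' ball z r ∩ iterWord T w '' K) ?_
    (fun w => (z - r / 2, (iterWord T w 0).2 + α ^ n / 2))
    (fun w => (z + r / 2, (iterWord T w 0).2 + α ^ n / 2)) fun w _ => ?_
  · rintro p ⟨hpz, hpK⟩
    obtain ⟨w, hw⟩ := mem_iUnion.1 (subset_iUnion_image_iterWord hKT n hpK)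
    exact mem_iUnion₂.2 ⟨w, mem_wordsMeetingTube.2 ⟨p, hpz, hw⟩, hpz, hw⟩
  · refine Subset.trans ?_ (preimage_fst_ball_inter_subset_union_ball hn)
    exact inter_subset_inter_right _ fun p hp => (image_iterWord_subset_Icc hα hβ hT hKQ w hp).2

lemma iUnion_wordsMeetingTube_subset (hα : 0 < α) (hβ : 0 < β)
    (hT : ∀ i, T i = diagAffine β α (c i)) (hKQ : K ⊆ Icc 0 1 ×ˢ Icc 0 1) (n : ℕ) (z r : ℝ) :
    ⋃ w ∈ wordsMeetingTube T K n z r, iterWord T w '' K ⊆ Prod.fst ⁻¹' ball z (r + β ^ n) := by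
  refine iUnion₂_subset fun w hw p hp => ?_
  obtain ⟨q, hqz, hqK⟩ := mem_wordsMeetingTube.1 hw
  have hp1 := (image_iterWord_subset_Icc hα hβ hT hKQ w hp).1
  have hq1 := (image_iterWord_subset_Icc hα hβ hT hKQ w hqK).1
  rw [Set.mem_preimage, Real.ball_eq_Ioo, mem_Ioo] at hqz ⊢
  constructor <;> linarith [hp1.1, hp1.2, hq1.1, hq1.2]

lemma card_wordsMeetingTube_le [Nonempty I] (hα : 0 < α) (hβ : 0 < β)
    (hT : ∀ i, T i = diagAffine β α (c i))
    (hTU : ∀ i, MapsTo (T i) (Ioo 0 1 ×ˢ Ioo 0 1) (Ioo 0 1 ×ˢ Ioo 0 1))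
    (hsep : Pairwise fun i j =>
      Disjoint (T i '' (Ioo 0 1 ×ˢ Ioo 0 1)) (T j '' (Ioo 0 1 ×ˢ Ioo 0 1)))
    (hK : IsCompact K) (hKQ : K ⊆ Icc 0 1 ×ˢ Icc 0 1) {μ : Measure (ℝ × ℝ)}
    (hμ : μ = (Fintype.card I : ℝ≥0∞)⁻¹ • ∑ i, μ.map (T i)) (hμK : μ K = 1) (n : ℕ)
    (z r : ℝ) :
    (#(wordsMeetingTube T K n z r) : ℝ≥0∞) ≤
      4 * (Fintype.card I : ℝ≥0∞) ^ n * μ (Prod.fst ⁻¹' ball z (r + β ^ n)) := by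
  set W := wordsMeetingTube T K n z r
  set m := (Fintype.card I : ℝ≥0∞) ^ n
  have hTm : ∀ i, Measurable (T i) := fun i => hT i ▸ (continuous_diagAffine _ _ _).measurable
  have hmeas : ∀ w : Fin n → I, MeasurableSet (iterWord T w '' K) := fun w =>
    (hK.image (iterWord_eq_diagAffine hT w ▸ continuous_diagAffine _ _ _)).measurableSet
  have hm : m ≠ 0 := by simp [m]
  calc (#W : ℝ≥0∞) = m * ∑ _w ∈ W, m⁻¹ := by
        rw [Finset.sum_const, nsmul_eq_mul, mul_left_comm,
          ENNReal.mul_inv_cancel hm (by simp [m]), mul_one]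
    _ ≤ m * ∑ w ∈ W, μ (iterWord T w '' K) := by
        gcongr with w
        exact inv_pow_card_le_measure_image_iterWord hTm hμ hμK w (hmeas w)
    _ ≤ m * (4 * μ (⋃ w ∈ W, iterWord T w '' K)) := by
        gcongr
        exact_mod_cast sum_measure_le_mul_measure_biUnion μ W (fun w _ => hmeas w)
          (card_le_four_of_forall_mem_image_iterWord hα hβ hT hTU hsep hKQ)
    _ ≤ m * (4 * μ (Prod.fst ⁻¹' ball z (r + β ^ n))) := by
        gcongr; exact iUnion_wordsMeetingTube_subset hα hβ hT hKQ n z r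
    _ = 4 * m * μ (Prod.fst ⁻¹' ball z (r + β ^ n)) := by ring

lemma coverNum_preimage_fst_ball_inter_le_measureReal [Nonempty I] (hα : 0 < α) (hαβ : α < β)
    (hβ : β < 1) (hc : ∀ i, (0 ≤ (c i).1 ∧ (c i).1 ≤ 1 - β) ∧ (0 ≤ (c i).2 ∧ (c i).2 ≤ 1 - α))
    (hT : ∀ i, T i = diagAffine β α (c i))
    (hsep : Pairwise fun i j =>
      Disjoint (T i '' (Ioo 0 1 ×ˢ Ioo 0 1)) (T j '' (Ioo 0 1 ×ˢ Ioo 0 1)))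
    (hK : IsCompact K) (hKne : K.Nonempty) (hKinv : K = ⋃ i, T i '' K)
    {μ : Measure (ℝ × ℝ)} [IsProbabilityMeasure μ]
    (hμ : μ = (Fintype.card I : ℝ≥0∞)⁻¹ • ∑ i, μ.map (T i)) {n : ℕ} {r : ℝ}
    (hn : α ^ n ≤ r) (z : ℝ) :
    (coverNum r (Prod.fst ⁻¹' ball z r ∩ K) : ℝ) ≤
      8 * (Fintype.card I : ℝ) ^ n * μ.real (Prod.fst ⁻¹' ball z (r + β ^ n)) := by
  have hβ0 : 0 < β := hα.trans hαβ
  have hβ1 : β.toNNReal < 1 := Real.toNNReal_lt_one.2 hβ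
  have hlip : ∀ i, LipschitzWith β.toNNReal (T i) := fun i =>
    hT i ▸ lipschitzWith_diagAffine hα.le hαβ.le _
  have hTQ : ∀ i, MapsTo (T i) (Icc 0 1 ×ˢ Icc 0 1) (Icc 0 1 ×ˢ Icc 0 1) := fun i =>
    hT i ▸ mapsTo_diagAffine_Icc hβ0 hα (hc i).1 (hc i).2
  have hTU : ∀ i, MapsTo (T i) (Ioo 0 1 ×ˢ Ioo 0 1) (Ioo 0 1 ×ˢ Ioo 0 1) := fun i =>
    hT i ▸ mapsTo_diagAffine_Ioo hβ0 hα (hc i).1 (hc i).2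
  have hTK : ∀ i, MapsTo (T i) K K := fun i x hx =>
    hKinv ▸ mem_iUnion.2 ⟨i, mem_image_of_mem _ hx⟩
  have hKQ : K ⊆ Icc 0 1 ×ˢ Icc 0 1 := subset_of_lipschitzWith_of_mapsTo hβ1 hlip hK hKne
    hKinv.subset (isClosed_Icc.prod isClosed_Icc)
    ((nonempty_Icc.2 zero_le_one).prod (nonempty_Icc.2 zero_le_one)) hTQ
  have hμK : μ K = 1 := measure_eq_one_of_lipschitzWith hβ1 hlip hμ hK.isClosed hKne hTK
  have hcard := card_wordsMeetingTube_le hα hβ0 hT hTU hsep hK hKQ hμ hμK n z r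
  calc (coverNum r (Prod.fst ⁻¹' ball z r ∩ K) : ℝ)
      ≤ 2 * (#(wordsMeetingTube T K n z r) : ℝ≥0∞).toReal := by
        exact_mod_cast coverNum_preimage_fst_ball_inter_le hα hβ0 hT hKQ hKinv.subset hn z
    _ ≤ 2 * (4 * (Fintype.card I : ℝ≥0∞) ^ n * μ (Prod.fst ⁻¹' ball z (r + β ^ n))).toReal :=
        mul_le_mul_of_nonneg_left (ENNReal.toReal_mono (by finiteness) hcard) zero_le_two
    _ = 8 * (Fintype.card I : ℝ) ^ n * μ.real (Prod.fst ⁻¹' ball z (r + β ^ n)) := by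
        simp only [ENNReal.toReal_mul, ENNReal.toReal_pow, ENNReal.toReal_natCast,
          ENNReal.toReal_ofNat, measureReal_def]
        ring

end DiagonalSelfAffine

lemma exists_measureReal_ball_le_of_lt_frostmanDim {ν : Measure ℝ} [IsFiniteMeasure ν] {s : ℝ}
    (hs : s < frostmanDim ν) :
    ∃ t, s < t ∧ 0 ≤ t ∧ ∃ C > 0, ∀ z ρ, 0 < ρ → ν.real (ball z ρ) ≤ C * ρ ^ t := by
  have huniv : ∀ z ρ, ν.real (ball z ρ) ≤ ν.real univ := fun z ρ =>
    measureReal_mono (subset_univ _)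
  obtain ⟨t, ⟨ht0, C, hC, hball⟩, hst⟩ := exists_lt_of_lt_csSup (by
    exact ⟨0, le_rfl, ν.real univ + 1, by positivity, fun z r _ _ => by
      rw [Real.rpow_zero, mul_one]; exact (huniv z r).trans (le_add_of_nonneg_right zero_le_one)⟩)
    hs
  refine ⟨t, hst, ht0, C + ν.real univ, by positivity, fun z ρ hρ => ?_⟩
  have hρt : 0 ≤ ρ ^ t := Real.rpow_nonneg hρ.le t
  have hνu : 0 ≤ ν.real univ := measureReal_nonneg
  rcases lt_or_ge ρ 1 with hρ1 | hρ1
  · nlinarith [hball z ρ hρ hρ1, measureReal_def ν (ball z ρ)]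
  · nlinarith [huniv z ρ, Real.one_le_rpow hρ1 ht0]

lemma add_pow_succ_rpow_le {β r t s : ℝ} (hβ : 0 < β) (hβ1 : β ≤ 1) (hr : 0 < r) {k : ℕ}
    (hrk : r ≤ β ^ k) (ht : 0 ≤ t) (hst : s ≤ t) :
    (r + β ^ (k + 1)) ^ t ≤ 2 ^ t * (β ^ s) ^ k := by
  have hβk : 0 < β ^ k := pow_pos hβ k
  have hsum : r + β ^ (k + 1) ≤ 2 * β ^ k := by
    linarith [pow_le_pow_of_le_one hβ.le hβ1 (k.le_add_right 1)]
  calc (r + β ^ (k + 1)) ^ t ≤ (2 * β ^ k) ^ t := by gcongr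
    _ = 2 ^ t * (β ^ k) ^ t := Real.mul_rpow zero_le_two hβk.le
    _ ≤ 2 ^ t * (β ^ k) ^ s := mul_le_mul_of_nonneg_left
        (Real.rpow_le_rpow_of_exponent_ge hβk (pow_le_one₀ hβ.le hβ1) hst) (by positivity)
    _ = 2 ^ t * (β ^ s) ^ k := by
        rw [← Real.rpow_natCast, ← Real.rpow_natCast, ← Real.rpow_mul hβ.le,
          ← Real.rpow_mul hβ.le, mul_comm (k : ℝ) s]

lemma pow_le_max_mul_rpow {x L : ℝ} (hx : 0 < x) {k : ℕ} (hkL : k ≤ L) (hLk : L ≤ k + 1) :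
    x ^ k ≤ max 1 x⁻¹ * x ^ L := by
  rw [← Real.rpow_natCast]
  rcases le_or_gt 1 x with hx1 | hx1
  · exact (Real.rpow_le_rpow_of_exponent_le hx1 hkL).trans
      (le_mul_of_one_le_left (by positivity) (le_max_left _ _))
  · calc x ^ (k : ℝ) ≤ x ^ (L - 1) := Real.rpow_le_rpow_of_exponent_ge hx hx1.le (by linarith)
      _ = x⁻¹ * x ^ L := by rw [Real.rpow_sub hx, Real.rpow_one, div_eq_inv_mul]
      _ ≤ max 1 x⁻¹ * x ^ L := by gcongr; exact le_max_right _ _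

lemma pow_le_max_mul_one_div_rpow {x α r : ℝ} (hx : 0 < x) (hα : 0 < α) (hα1 : α < 1) {k : ℕ}
    (hk : α ^ (k + 1) < r) (hk' : r ≤ α ^ k) :
    x ^ k ≤ max 1 x⁻¹ * (1 / r) ^ (Real.log x / Real.log (1 / α)) := by
  have hr : 0 < r := (pow_pos hα _).trans hk
  have hlog : 0 < Real.log (1 / α) := Real.log_pos (one_lt_one_div hα hα1)
  have hL : (1 / r) ^ (Real.log x / Real.log (1 / α)) =
      x ^ (Real.log (1 / r) / Real.log (1 / α)) := by
    rw [Real.rpow_def_of_pos (by positivity), Real.rpow_def_of_pos hx]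
    ring_nf
  rw [hL]
  refine pow_le_max_mul_rpow hx ?_ ?_
  · rw [le_div_iff₀ hlog, ← Real.log_pow, one_div_pow]
    exact Real.log_le_log (by positivity) (one_div_le_one_div_of_le hr hk')
  · rw [div_le_iff₀ hlog, ← Nat.cast_succ, ← Real.log_pow, one_div_pow]
    exact Real.log_le_log (by positivity) (one_div_le_one_div_of_le (pow_pos hα _) hk.le)

theorem stmt18 (I : Type*) [Fintype I] [Nonempty I]
    (α β : ℝ) (hα : 0 < α) (hαβ : α < β) (hβ : β < 1)
    (b a : I → ℝ) (hb : ∀ i, 0 ≤ b i ∧ b i ≤ 1 - β) (ha : ∀ i, 0 ≤ a i ∧ a i ≤ 1 - α)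
    (T : I → ℝ × ℝ → ℝ × ℝ) (hT : ∀ i p, T i p = (β * p.1 + b i, α * p.2 + a i))
    -- the open rectangles `T_i((0,1)²)` are pairwise disjoint
    (hsep : ∀ i j, i ≠ j → Disjoint (T i '' (Set.Ioo (0:ℝ) 1 ×ˢ Set.Ioo (0:ℝ) 1))
      (T j '' (Set.Ioo (0:ℝ) 1 ×ˢ Set.Ioo (0:ℝ) 1)))
    -- `K` is the attractor
    (K : Set (ℝ × ℝ)) (hK : IsCompact K) (hKne : K.Nonempty) (hKinv : K = ⋃ i, T i '' K)
    -- `μ` is the uniform self-affine measure, `ν` its projection to the `x`-axis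
    (μ : Measure (ℝ × ℝ)) [IsProbabilityMeasure μ]
    (hμ : μ = (Fintype.card I : ENNReal)⁻¹ • ∑ i : I, Measure.map (T i) μ)
    (ν : Measure ℝ) (hν : ν = Measure.map Prod.fst μ)
    (s : ℝ) (hs : s = frostmanDim ν)
    (ε : ℝ) (hε : 0 < ε) :
    ∃ C : ℝ, 0 < C ∧ ∀ z ∈ Prod.fst '' K, ∀ r : ℝ, 0 < r → r < 1 →
      (coverNum r (Prod.fst ⁻¹' Metric.ball z r ∩ K) : ℝ) ≤
        C * (1 / r) ^ (Real.log ((Fintype.card I : ℝ) * β ^ (s - ε)) / Real.log (1 / α)) := by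
  have hβ0 : 0 < β := hα.trans hαβ
  have : IsProbabilityMeasure ν := hν ▸ Measure.isProbabilityMeasure_map measurable_fst.aemeasurable
  obtain ⟨t, hst, ht0, C, hC, hball⟩ :=
    exists_measureReal_ball_le_of_lt_frostmanDim (ν := ν) (s := s - ε) (by linarith)
  set m : ℝ := (Fintype.card I : ℝ)
  set x := m * β ^ (s - ε)
  have hx : 0 < x := by positivity
  refine ⟨8 * m * C * 2 ^ t * max 1 x⁻¹, by positivity, fun z _ r hr0 hr1 => ?_⟩
  obtain ⟨k, hk, hk'⟩ := exists_nat_pow_near_of_lt_one hr0 hr1.le hα (hαβ.trans hβ)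
  calc (coverNum r (Prod.fst ⁻¹' ball z r ∩ K) : ℝ)
      ≤ 8 * m ^ (k + 1) * ν.real (ball z (r + β ^ (k + 1))) := by
        rw [hν, map_measureReal_apply measurable_fst measurableSet_ball]
        exact coverNum_preimage_fst_ball_inter_le_measureReal (c := fun i => (b i, a i)) hα hαβ
          hβ (fun i => ⟨hb i, ha i⟩) (fun i => funext (hT i)) hsep hK hKne hKinv hμ hk.le z
    _ ≤ 8 * m ^ (k + 1) * (C * (2 ^ t * (β ^ (s - ε)) ^ k)) := by
        gcongr
        refine (hball z _ (by positivity)).trans ?_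
        gcongr
        exact add_pow_succ_rpow_le hβ0 hβ.le hr0 (hk'.trans (pow_le_pow_left₀ hα.le hαβ.le k))
          ht0 hst.le
    _ = 8 * m * C * 2 ^ t * x ^ k := by ring
    _ ≤ 8 * m * C * 2 ^ t * (max 1 x⁻¹ * (1 / r) ^ (Real.log x / Real.log (1 / α))) := by
        gcongr; exact pow_le_max_mul_one_div_rpow hx hα (hαβ.trans hβ) hk hk'
    _ = _ := by ring
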